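/- arXiv:1011.3880 — 4 statements merged into one kernel-verified Lean document; each statement's English description precedes it below -/
import Mathlib

section
/- Let F be a free group of finite rank t and let R be a normal subgroup of F generated as a normal subgroup by m elements, such that G = F/R is finite. Then the abelian group (R ∩ [F,F])/[R,F] is generated by at most m - t elements. In particular m ≥ t. -/
/-!
Write `π : F → F ⧸ [R, F]`. The image `π R` is central, so it is generated as a group (not just
as a normal subgroup) by the `m` elements `π S`, i.e. it is the image of a homomorphism `Φ` from
the free abelian group on `S`. Composing `Φ` with the induced map `F ⧸ [R, F] → F^ab ≅ ℤ^t` gives a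
map `ℤ^S → ℤ^t` whose image is the image of `R` in `F^ab`; this has finite index, hence rank `t`.
Its kernel is then free of rank `m - t` by rank–nullity, and `Φ` maps it onto
`(R ∩ [F, F]) ⧸ [R, F]`.
-/

open Module
open scoped IsMulCommutative

theorem Submodule.exists_finset_card_eq_finrank_and_span_eq {R M : Type*} [CommRing R]
    [IsDomain R] [IsPrincipalIdealRing R] [AddCommGroup M] [Module R M] [Module.Free R M]
    [Module.Finite R M] (N : Submodule R M) :
    ∃ T : Finset M, T.card = finrank R N ∧ span R (T : Set M) = N := by
  classical
  let b := Module.finBasis R N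
  refine ⟨Finset.univ.image (N.subtype ∘ b), ?_, ?_⟩
  · rw [Finset.card_image_of_injective _ (N.injective_subtype.comp b.injective),
      Finset.card_univ, Fintype.card_fin]
  · rw [Finset.coe_image, Finset.coe_univ, Set.image_univ, Set.range_comp, ← map_span, b.span_eq,
      map_subtype_top]

theorem LinearMap.exists_finset_card_add_finrank_range_eq_and_span_eq_ker {R M M' : Type*}
    [CommRing R] [IsDomain R] [IsPrincipalIdealRing R] [AddCommGroup M] [Module R M]
    [Module.Free R M] [Module.Finite R M] [AddCommGroup M'] [Module R M'] (f : M →ₗ[R] M') :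
    ∃ T : Finset M, T.card + finrank R (range f) = finrank R M ∧
      Submodule.span R (T : Set M) = ker f := by
  obtain ⟨T, hcard, hspan⟩ := (ker f).exists_finset_card_eq_finrank_and_span_eq
  refine ⟨T, ?_, hspan⟩
  rw [hcard, ← f.quotKerEquivRange.finrank_eq, add_comm, Submodule.finrank_quotient_add_finrank]

-- `FreeAbelianGroup ι` is by definition `Additive (Abelianization (FreeGroup ι))`.
instance (ι : Type*) : Module.Free ℤ (Additive (Abelianization (FreeGroup ι))) :=
  .of_basis (FreeAbelianGroup.basis ι)

instance (ι : Type*) [Finite ι] : Module.Finite ℤ (Additive (Abelianization (FreeGroup ι))) :=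
  .of_basis (FreeAbelianGroup.basis ι)

theorem FreeGroup.finrank_additive_abelianization (ι : Type*) [Fintype ι] :
    finrank ℤ (Additive (Abelianization (FreeGroup ι))) = Fintype.card ι :=
  finrank_eq_card_basis (FreeAbelianGroup.basis ι)

theorem Abelianization.exists_finset_card_add_finrank_range_eq_and_closure_eq_ker
    {ι B : Type*} [Fintype ι] [CommGroup B] (f : Abelianization (FreeGroup ι) →* B) :
    ∃ T : Finset (Abelianization (FreeGroup ι)),
      T.card + finrank ℤ f.range.toAddSubgroup.toIntSubmodule = Fintype.card ι ∧
        Subgroup.closure (T : Set (Abelianization (FreeGroup ι))) = f.ker := by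
  classical
  obtain ⟨T, hcard, hspan⟩ :=
    f.toAdditive.toIntLinearMap.exists_finset_card_add_finrank_range_eq_and_span_eq_ker
  refine ⟨T.image Additive.toMul, ?_, ?_⟩
  · rw [Finset.card_image_of_injective _ Additive.toMul.injective,
      ← FreeGroup.finrank_additive_abelianization, ← hcard]
    rfl
  · apply Subgroup.toAddSubgroup.injective
    rw [Subgroup.toAddSubgroup_closure, Finset.coe_image, Additive.toMul.preimage_image,
      ← Submodule.span_int_eq_addSubgroupClosure, hspan]
    rfl

theorem FreeGroup.finrank_map_abelianizationOf_eq_card {ι : Type*} [Fintype ι]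
    (R : Subgroup (FreeGroup ι)) [Finite (FreeGroup ι ⧸ R)] :
    finrank ℤ (R.map Abelianization.of).toAddSubgroup.toIntSubmodule = Fintype.card ι := by
  have : (R.map Abelianization.of).toAddSubgroup.FiniteIndex := by
    refine ⟨?_⟩
    rw [Subgroup.index_toAddSubgroup]
    exact ne_zero_of_dvd_ne_zero R.index_ne_zero_of_finite
      (R.index_map_dvd QuotientGroup.mk_surjective)
  rw [← FreeGroup.finrank_additive_abelianization, ← Submodule.finiteQuotient_iff]
  exact AddSubgroup.finite_quotient_of_finiteIndex (H := (R.map Abelianization.of).toAddSubgroup)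

namespace Subgroup

variable {G : Type*} [Group G]

theorem map_mk'_le_center (N : Subgroup G) [N.Normal] :
    N.map (QuotientGroup.mk' ⁅N, ⊤⁆) ≤ center (G ⧸ ⁅N, ⊤⁆) := by
  rw [← commutator_top_right_eq_bot_iff_le_center,
    ← map_top_of_surjective _ (QuotientGroup.mk'_surjective _), ← map_commutator,
    QuotientGroup.map_mk'_self]

theorem normalClosure_eq_closure_of_subset_center {s : Set G} (hs : s ⊆ center G) :
    normalClosure s = closure s := by
  have : (closure s).Normal :=
    ⟨fun n hn g => by
      rwa [mem_center_iff.mp ((closure_le _).mpr hs hn) g, mul_inv_cancel_right]⟩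
  exact le_antisymm (normalClosure_le_normal subset_closure)
    ((closure_le _).mpr subset_normalClosure)

theorem map_inf_comap {H : Type*} [Group H] (f : G →* H) (A : Subgroup G) (B : Subgroup H) :
    (A ⊓ B.comap f).map f = A.map f ⊓ B := by
  refine le_antisymm
    (le_inf (map_mono inf_le_left) ((map_mono inf_le_right).trans (map_comap_le _ _))) ?_
  rintro _ ⟨⟨x, hx, rfl⟩, hfx⟩
  exact ⟨x, ⟨hx, hfx⟩, rfl⟩

end Subgroup

theorem exists_finset_card_add_finrank_le_and_closure_eq_map_inf_commutator {G : Type*}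
    [Group G] (S : Finset G) (R : Subgroup G) [R.Normal] (hR : R = Subgroup.normalClosure S) :
    ∃ T : Finset (G ⧸ ⁅R, (⊤ : Subgroup G)⁆),
      T.card + finrank ℤ (R.map Abelianization.of).toAddSubgroup.toIntSubmodule ≤ S.card ∧
        Subgroup.closure (T : Set (G ⧸ ⁅R, (⊤ : Subgroup G)⁆)) =
          (R ⊓ commutator G).map (QuotientGroup.mk' ⁅R, ⊤⁆) := by
  classical
  set π := QuotientGroup.mk' ⁅R, (⊤ : Subgroup G)⁆
  have hS : π '' S ⊆ Subgroup.center (G ⧸ ⁅R, (⊤ : Subgroup G)⁆) := fun _ ⟨s, hs, h⟩ =>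
    R.map_mk'_le_center ⟨s, hR ▸ Subgroup.subset_normalClosure hs, h⟩
  let Φ : Abelianization (FreeGroup S) →* G ⧸ ⁅R, (⊤ : Subgroup G)⁆ :=
    (Subgroup.center _).subtype.comp
      (Abelianization.lift (FreeGroup.lift fun s => ⟨π s, hS ⟨s, s.2, rfl⟩⟩))
  let ψ : G ⧸ ⁅R, (⊤ : Subgroup G)⁆ →* Abelianization G := QuotientGroup.lift _ Abelianization.of
    ((Subgroup.commutator_mono le_top le_top).trans (Abelianization.ker_of G).ge)
  have hΦ : Φ.range = R.map π := calc
    Φ.range = (Φ.comp Abelianization.of).range := by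
      rw [MonoidHom.range_comp Φ Abelianization.of,
        (MonoidHom.range_eq_top (f := Abelianization.of)).mpr QuotientGroup.mk_surjective,
        ← MonoidHom.range_eq_map]
    _ = Subgroup.closure (π '' S) := by
      rw [show Φ.comp Abelianization.of = FreeGroup.lift fun s : S => π s from
        FreeGroup.ext_hom _ _ fun s => rfl, FreeGroup.range_lift_eq_closure, Set.image_eq_range]
      rfl
    _ = R.map π := by
      rw [← Subgroup.normalClosure_eq_closure_of_subset_center hS,
        ← Subgroup.map_normalClosure _ _ (QuotientGroup.mk'_surjective _), ← hR]
  have hψΦ : (ψ.comp Φ).range = R.map Abelianization.of := by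
    rw [MonoidHom.range_comp, hΦ, Subgroup.map_map]
    rfl
  obtain ⟨T, hcard, hT⟩ :=
    Abelianization.exists_finset_card_add_finrank_range_eq_and_closure_eq_ker (ψ.comp Φ)
  refine ⟨T.image Φ, ?_, ?_⟩
  · rw [hψΦ, Fintype.card_coe] at hcard
    exact hcard ▸ Nat.add_le_add_right Finset.card_image_le _
  · rw [Finset.coe_image, ← MonoidHom.map_closure, hT, ← MonoidHom.comap_ker,
      Subgroup.map_comap_eq, hΦ, ← Subgroup.map_inf_comap, MonoidHom.comap_ker, show ψ.comp π = Abelianization.of from rfl,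
      Abelianization.ker_of]

/-- Let `F` be a free group of finite rank `t` and `R` a normal subgroup of `F`
which is the normal closure of `m` elements, such that `F/R` is finite.  Then
`m ≥ t`, and the abelian group `(R ∩ [F,F])/[R,F]` (viewed as the image of
`R ∩ [F,F]` in `F/[R,F]`) is generated by at most `m - t` elements. -/
theorem schur_multiplier_gen_bound (t m : ℕ)
    (S : Finset (FreeGroup (Fin t))) (hcard : S.card = m)
    (R : Subgroup (FreeGroup (Fin t))) [R.Normal]
    (hR : R = Subgroup.normalClosure (S : Set (FreeGroup (Fin t))))
    (hfin : Finite (FreeGroup (Fin t) ⧸ R)) :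
    t ≤ m ∧
      ∃ T : Finset (FreeGroup (Fin t) ⧸ ⁅R, (⊤ : Subgroup (FreeGroup (Fin t)))⁆),
        T.card ≤ m - t ∧
        Subgroup.closure (T : Set (FreeGroup (Fin t) ⧸ ⁅R, (⊤ : Subgroup (FreeGroup (Fin t)))⁆)) =
          (R ⊓ ⁅(⊤ : Subgroup (FreeGroup (Fin t))), ⊤⁆).map
            (QuotientGroup.mk' ⁅R, (⊤ : Subgroup (FreeGroup (Fin t)))⁆) := by
  obtain ⟨T, hT_card, hT⟩ :=
    exists_finset_card_add_finrank_le_and_closure_eq_map_inf_commutator S R hR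
  rw [FreeGroup.finrank_map_abelianizationOf_eq_card, Fintype.card_fin, hcard] at hT_card
  exact ⟨by omega, T, by omega, hT⟩
end

section
/- Let G be a finite group given by a presentation F/R with F free of rank t and R the normal closure of m elements. Then d(M(G)) ≤ m - t, where M(G) = (R ∩ [F,F])/[R,F] is the Schur multiplier and d denotes the minimal number of generators. -/
/-!
The image `R/[R,F]` of `R` in `F/[R,F]` is central, hence an abelian group generated by the images
of the `m` relators, i.e. a quotient of `ℤ^m`. Its image in `F^ab ≅ ℤ^t` is the image of `R`, which
has finite index because `F/R` is finite, so it has rank `t`. The multiplier is the kernel of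
`R/[R,F] → F^ab`; it is the image of the kernel of the composite `ℤ^m → ℤ^t`, a free abelian group
of rank `m - t`.
-/

open Module Subgroup

theorem LinearMap.exists_finset_card_le_span_eq_ker {R M N ι : Type*} [CommRing R] [IsDomain R]
    [IsPrincipalIdealRing R] [AddCommGroup M] [Module R M] [AddCommGroup N] [Module R N]
    [Fintype ι] {v : ι → M} (hv : Submodule.span R (Set.range v) = ⊤) (g : M →ₗ[R] N) :
    ∃ T : Finset M, T.card ≤ Fintype.card ι - finrank R (range g) ∧
      Submodule.span R (T : Set M) = ker g := by
  classical
  set f := Fintype.linearCombination R v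
  have hf : range f = ⊤ := by rw [Fintype.range_linearCombination, hv]
  obtain ⟨n, b⟩ := Submodule.basisOfPid (Pi.basisFun R ι) (ker (g ∘ₗ f))
  have hrank : finrank R (range g) + n = Fintype.card ι := by
    rw [← range_comp_of_range_eq_top g hf, ← Fintype.card_fin n, ← finrank_eq_card_basis b,
      ← (g ∘ₗ f).quotKerEquivRange.finrank_eq, Submodule.finrank_quotient_add_finrank,
      finrank_fintype_fun_eq_card]
  refine ⟨Finset.univ.image fun j => f (b j), ?_, ?_⟩
  · calc _ ≤ (Finset.univ : Finset (Fin n)).card := Finset.card_image_le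
      _ = Fintype.card ι - finrank R (range g) := by rw [Finset.card_fin]; omega
  · rw [Finset.coe_image, Finset.coe_univ, Set.image_univ,
      show Set.range (fun j => f (b j)) = (f ∘ₗ (ker (g ∘ₗ f)).subtype) '' Set.range b by
        rw [← Set.range_comp]; rfl,
      Submodule.span_image, b.span_eq, Submodule.map_top, range_comp, Submodule.range_subtype,
      ker_comp, Submodule.map_comap_eq_of_surjective (range_eq_top.1 hf)]

theorem MonoidHom.exists_finset_card_le_closure_eq_ker {M B ι : Type*} [CommGroup M] [CommGroup B]
    [Fintype ι] [Module.Finite ℤ (Additive B)] [IsTorsionFree ℤ (Additive B)]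
    {a : ι → M} (ha : closure (Set.range a) = ⊤) (g : M →* B) [g.range.FiniteIndex] :
    ∃ T : Finset M, T.card ≤ Fintype.card ι - finrank ℤ (Additive B) ∧
      closure (T : Set M) = g.ker := by
  set g' := g.toAdditive.toIntLinearMap
  have hspan : Submodule.span ℤ (Set.range (Additive.ofMul ∘ a)) = ⊤ := by
    apply Submodule.toAddSubgroup_injective
    rw [Submodule.span_int_eq_addSubgroupClosure, Set.range_comp, Equiv.image_eq_preimage_symm]
    exact (toAddSubgroup_closure _).symm.trans (congrArg _ ha)
  have : g.range.toAddSubgroup.FiniteIndex := finiteIndex_toAddSubgroup_iff.2 ‹_›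
  have hrank : finrank ℤ (LinearMap.range g') = finrank ℤ (Additive B) :=
    AddSubgroup.finrank_eq_of_finiteIndex g.range.toAddSubgroup
  obtain ⟨T, hT, hTspan⟩ := g'.exists_finset_card_le_span_eq_ker hspan
  refine ⟨T.map Additive.toMul.toEmbedding, by rwa [Finset.card_map, ← hrank], ?_⟩
  apply toAddSubgroup.injective
  rw [toAddSubgroup_closure, Finset.coe_map, Equiv.coe_toEmbedding, Equiv.preimage_image,
    ← Submodule.span_int_eq_addSubgroupClosure, hTspan]
  rfl

open scoped IsMulCommutative in
theorem Subgroup.exists_finset_card_le_closure_eq_inf_ker {Q B : Type*} [Group Q] [CommGroup B]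
    [Module.Finite ℤ (Additive B)] [IsTorsionFree ℤ (Additive B)] {A : Subgroup Q}
    [IsMulCommutative A] {s : Finset Q} (hs : closure (s : Set Q) = A) (ψ : Q →* B)
    [(A.map ψ).FiniteIndex] :
    ∃ T : Finset Q, T.card ≤ s.card - finrank ℤ (Additive B) ∧
      closure (T : Set Q) = A ⊓ ψ.ker := by
  set a : s → A := fun x => ⟨x, hs ▸ subset_closure x.2⟩
  have ha : closure (Set.range a) = ⊤ := by
    apply map_injective A.subtype_injective
    rw [MonoidHom.map_closure, ← Set.range_comp, ← MonoidHom.range_eq_map, range_subtype]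
    exact (congrArg closure Subtype.range_coe).trans hs
  set g := ψ.comp A.subtype
  have : g.range.FiniteIndex := by
    rwa [MonoidHom.range_comp, range_subtype]
  obtain ⟨T, hT, hTcl⟩ := g.exists_finset_card_le_closure_eq_ker ha
  refine ⟨T.map (Function.Embedding.subtype _), by simpa using hT, ?_⟩
  rw [Finset.coe_map, Function.Embedding.coe_subtype, ← coe_subtype, ← MonoidHom.map_closure, hTcl,
    ← MonoidHom.comap_ker, map_comap_eq, range_subtype]

theorem Subgroup.normalClosure_eq_closure_of_subset_center_s2 {G : Type*} [Group G] {s : Set G}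
    (hs : s ⊆ center G) : normalClosure s = closure s := by
  have : (closure s).Normal := ⟨fun n hn g => by
    rwa [mem_center_iff.1 ((closure_le _).2 hs hn) g, mul_inv_cancel_right]⟩
  exact le_antisymm (normalClosure_le_normal subset_closure) closure_le_normalClosure

theorem Subgroup.map_mk'_le_center_s2 {G : Type*} [Group G] (H : Subgroup G) [H.Normal] :
    H.map (QuotientGroup.mk' ⁅H, ⊤⁆) ≤ center (G ⧸ ⁅H, ⊤⁆) := by
  rw [← commutator_top_right_eq_bot_iff_le_center,
    ← map_top_of_surjective _ (QuotientGroup.mk'_surjective _), ← map_commutator, map_eq_bot_iff,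
    QuotientGroup.ker_mk']

theorem Subgroup.map_inf_comap_s2 {G N : Type*} [Group G] [Group N] (f : G →* N) (H : Subgroup G)
    (K : Subgroup N) : (H ⊓ K.comap f).map f = H.map f ⊓ K :=
  SetLike.coe_injective (by simp [Set.image_inter_preimage])

instance (α : Type*) [Finite α] : Module.Finite ℤ (Additive (Abelianization (FreeGroup α))) :=
  inferInstanceAs (Module.Finite ℤ (FreeAbelianGroup α))

instance (α : Type*) : IsTorsionFree ℤ (Additive (Abelianization (FreeGroup α))) :=
  inferInstanceAs (IsTorsionFree ℤ (FreeAbelianGroup α))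

theorem FreeGroup.finrank_abelianization (α : Type*) [Fintype α] :
    finrank ℤ (Additive (Abelianization (FreeGroup α))) = Fintype.card α :=
  (FreeAbelianGroup.equivFinsupp α).toIntLinearEquiv.finrank_eq.trans (finrank_finsupp_self ℤ)

/-- Let a finite group `G` be presented as `F/R` with `F` free of rank `t` and
`R` the normal closure of `m` elements.  Then `d(M(G)) ≤ m - t`, where
`M(G) = (R ∩ [F,F])/[R,F]` is the Schur multiplier (realized as the image of
`R ∩ [F,F]` in `F/[R,F]`) and `d` is the minimal number of generators:
i.e. `M(G)` admits a generating set of at most `m - t` elements. -/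
theorem schur_multiplier_d_le_def (t m : ℕ)
    (S : Finset (FreeGroup (Fin t))) (hcard : S.card = m)
    (R : Subgroup (FreeGroup (Fin t))) [R.Normal]
    (hR : R = Subgroup.normalClosure (S : Set (FreeGroup (Fin t))))
    (hfin : Finite (FreeGroup (Fin t) ⧸ R)) :
    ∃ T : Finset (FreeGroup (Fin t) ⧸ ⁅R, (⊤ : Subgroup (FreeGroup (Fin t)))⁆),
      T.card ≤ m - t ∧
      Subgroup.closure (T : Set (FreeGroup (Fin t) ⧸ ⁅R, (⊤ : Subgroup (FreeGroup (Fin t)))⁆)) =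
        (R ⊓ ⁅(⊤ : Subgroup (FreeGroup (Fin t))), ⊤⁆).map
          (QuotientGroup.mk' ⁅R, (⊤ : Subgroup (FreeGroup (Fin t)))⁆) := by
  classical
  set φ := QuotientGroup.mk' ⁅R, (⊤ : Subgroup (FreeGroup (Fin t)))⁆
  set ψ := QuotientGroup.lift ⁅R, ⊤⁆ (Abelianization.of (G := FreeGroup (Fin t)))
    ((commutator_mono le_top le_rfl).trans (Abelianization.ker_of (FreeGroup (Fin t))).ge)
  have hψφ : ψ.comp φ = Abelianization.of := rfl
  have hcentral := R.map_mk'_le_center_s2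
  have : IsMulCommutative (R.map φ) :=
    le_centralizer_iff_isMulCommutative.1 (hcentral.trans (center_le_centralizer _))
  have hgen : Subgroup.closure ((S.image φ : Finset _) : Set _) = R.map φ := by
    rw [Finset.coe_image, ← normalClosure_eq_closure_of_subset_center_s2, ← map_normalClosure _ _
      (QuotientGroup.mk'_surjective _), ← hR]
    rintro _ ⟨x, hx, rfl⟩
    exact hcentral (mem_map_of_mem φ (hR ▸ subset_normalClosure hx))
  have : R.FiniteIndex := finiteIndex_of_finite_quotient
  have : ((R.map φ).map ψ).FiniteIndex := by
    rw [map_map, hψφ]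
    exact ⟨ne_zero_of_dvd_ne_zero FiniteIndex.index_ne_zero
      (index_map_dvd _ (QuotientGroup.mk'_surjective _))⟩
  obtain ⟨T, hT, hTcl⟩ := exists_finset_card_le_closure_eq_inf_ker hgen ψ
  refine ⟨T, ?_, ?_⟩
  · rw [FreeGroup.finrank_abelianization, Fintype.card_fin] at hT
    exact hT.trans (Nat.sub_le_sub_right (hcard ▸ Finset.card_image_le) t)
  · rw [hTcl, ← map_inf_comap_s2, MonoidHom.comap_ker, hψφ, Abelianization.ker_of,
      _root_.commutator_def]
end

section
/- The iterated wreath product (C₂ ≀ C₂) ≀ C₂ admits the presentation ⟨x, y, z | x², y², z², [x, x^y], [y, y^z], [x, x^z], [x, y^z], [y, x^z]⟩. -/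
namespace Wr

variable (G H : Type*) [Group G] [Group H]

/-- The regular action of `H` on the base group `H → G` of the wreath product. -/
def wrAction : H →* MulAut (H → G) where
  toFun h :=
    { toFun := fun f x => f (h⁻¹ * x)
      invFun := fun f x => f (h * x)
      left_inv := fun f => by funext x; simp
      right_inv := fun f => by funext x; simp
      map_mul' := fun f g => rfl }
  map_one' := by ext f x; simp
  map_mul' := fun h₁ h₂ => by ext f x; simp [mul_assoc]

/-- The regular wreath product `G ≀ H = (H → G) ⋊ H`. -/
def Wreath := (H → G) ⋊[wrAction G H] H

instance : Group (Wreath G H) := SemidirectProduct.instGroup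

/-- The cyclic group of order 2. -/
abbrev C2 := Multiplicative (ZMod 2)

end Wr

namespace Stmt8
open Wr
open scoped commutatorElement

/-- Generators `x, y, z` of the free group on three letters. -/
def x : FreeGroup (Fin 3) := FreeGroup.of 0
def y : FreeGroup (Fin 3) := FreeGroup.of 1
def z : FreeGroup (Fin 3) := FreeGroup.of 2

/-- The relators `x², y², z², [x,x^y], [y,y^z], [x,x^z], [x,y^z], [y,x^z]`. -/
def rels : Set (FreeGroup (Fin 3)) :=
  { x ^ 2, y ^ 2, z ^ 2,
    ⁅x, y⁻¹ * x * y⁆, ⁅y, z⁻¹ * y * z⁆, ⁅x, z⁻¹ * x * z⁆,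
    ⁅x, z⁻¹ * y * z⁆, ⁅y, z⁻¹ * x * z⁆ }

end Stmt8

/-!
A homomorphism out of `G ≀ H` (with `H` finite) is given by a homomorphism `A` on the copy of `G`
at coordinate `1` and a homomorphism `B` on `H`, subject only to `A(G)` commuting with its
conjugates `B(h)⁻¹ A(G) B(h)`, `h ≠ 1`. For `C₂ ≀ C₂` this condition is `[x, x^y] = 1`;
for the outer wreath product with `z` it is the four relators `[u, v^z]`, `u, v ∈ {x, y}`, checked
on generators. Together with `x² = y² = z² = 1` this yields `Ψ : (C₂ ≀ C₂) ≀ C₂ → ⟨x, y, z ∣ …⟩`.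
Conversely the standard generators of the wreath product satisfy the relators (a finite
computation), giving `Φ`. Both groups are generated by the images of `x, y, z`, on which `Φ` and
`Ψ` are mutually inverse.
-/

open Multiplicative
open scoped commutatorElement

section Cyclic

variable {P : Type*} [Monoid P]

def zmodPowHom (n : ℕ) [NeZero n] (w : P) (hw : w ^ n = 1) : Multiplicative (ZMod n) →* P where
  toFun g := w ^ g.toAdd.val
  map_one' := by simp
  map_mul' a b := by rw [toAdd_mul, ZMod.val_add, ← pow_eq_pow_mod _ hw, pow_add]

@[simp]
lemma zmodPowHom_ofAdd_one (n : ℕ) [NeZero n] (w : P) (hw : w ^ n = 1) :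
    zmodPowHom n w hw (ofAdd 1) = w := by
  rw [zmodPowHom, MonoidHom.coe_mk, OneHom.coe_mk, toAdd_ofAdd, ZMod.val_one_eq_one_mod,
    ← pow_eq_pow_mod _ hw, pow_one]

lemma closure_ofAdd_one (n : ℕ) [NeZero n] :
    Subgroup.closure {ofAdd (1 : ZMod n)} = ⊤ := by
  refine (Subgroup.eq_top_iff' _).2 fun g => ?_
  have hg : ofAdd (1 : ZMod n) ^ g.toAdd.val = g := by
    rw [← ofAdd_nsmul, nsmul_one, ZMod.natCast_zmod_val, ofAdd_toAdd]
  exact hg ▸ pow_mem (Subgroup.mem_closure_singleton_self _) _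

end Cyclic

section Commute

variable {M P : Type*} [Group M] [Group P] {S : Set M}

lemma commute_map_of_closure_eq_top (hS : Subgroup.closure S = ⊤) {f : M →* P} {p : P}
    (h : ∀ s ∈ S, Commute (f s) p) (m : M) : Commute (f m) p := by
  induction hS ▸ Subgroup.mem_top m using Subgroup.closure_induction with
  | mem s hs => exact h s hs
  | one => simp
  | mul m m' _ _ hm hm' => simpa using hm.mul_left hm'
  | inv m _ hm => simpa using hm.inv_left

lemma commute_conj_of_closure_eq_top (hS : Subgroup.closure S = ⊤) {f : M →* P} {c : P}
    (h : ∀ s ∈ S, ∀ t ∈ S, Commute (f s) (c⁻¹ * f t * c)) (m m' : M) :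
    Commute (f m) (c⁻¹ * f m' * c) := by
  refine commute_map_of_closure_eq_top hS (fun s hs => ?_) m
  have h_conj := commute_map_of_closure_eq_top hS (f := (MulAut.conj c⁻¹).toMonoidHom.comp f)
    (p := f s) (fun t ht => by simpa using (h s hs t ht).symm) m'
  simpa using h_conj.symm

end Commute

lemma PresentedGroup.commute_mk_of_commutatorElement_mem {α : Type*} {rels : Set (FreeGroup α)}
    {u v : FreeGroup α} (h : ⁅u, v⁆ ∈ rels) : Commute (mk rels u) (mk rels v) := by
  rw [← commutatorElement_eq_one_iff_commute, ← map_commutatorElement]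
  exact PresentedGroup.one_of_mem h

namespace Wr

variable {G H : Type*} [Group G] [Group H]

instance [DecidableEq (H → G)] [DecidableEq H] : DecidableEq (Wreath G H) :=
  fun _ _ => decidable_of_iff _ SemidirectProduct.ext_iff.symm

lemma wrAction_mulSingle [DecidableEq H] (h i : H) (g : G) :
    wrAction G H h (Pi.mulSingle i g) = Pi.mulSingle (h * i) g := by
  funext k
  simp [wrAction, Pi.mulSingle_apply, inv_mul_eq_iff_eq_mul]

namespace Wreath

def inl : (H → G) →* Wreath G H := SemidirectProduct.inl

def inr : H →* Wreath G H := SemidirectProduct.inr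

variable {P : Type*} [Group P] {A : G →* P} {B : H →* P}

lemma pairwise_commute_conj_comp (hAB : ∀ h ≠ 1, ∀ g g', Commute (A g) ((B h)⁻¹ * A g' * B h)) :
    Pairwise fun i j => ∀ g g', Commute ((MulAut.conj (B i)).toMonoidHom.comp A g)
      ((MulAut.conj (B j)).toMonoidHom.comp A g') := by
  intro i j hij g g'
  have h_conj := (hAB (j⁻¹ * i) (by simpa [inv_mul_eq_one] using hij.symm) g g').map
    (MulAut.conj (B i)).toMonoidHom
  simpa [mul_assoc] using h_conj

variable [DecidableEq H]

def single : G →* Wreath G H := inl.comp (MonoidHom.mulSingle (fun _ => G) 1)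

lemma inl_mulSingle (h : H) (g : G) :
    inl (Pi.mulSingle h g) = (inr h * single g * inr h⁻¹ : Wreath G H) := by
  have h_aut := SemidirectProduct.inl_aut (φ := wrAction G H) h (Pi.mulSingle 1 g)
  rwa [wrAction_mulSingle, mul_one] at h_aut

theorem closure_image_single_union_image_inr [Finite H] {S : Set G} {T : Set H}
    (hS : Subgroup.closure S = ⊤) (hT : Subgroup.closure T = ⊤) :
    Subgroup.closure (single '' S ∪ inr '' T : Set (Wreath G H)) = ⊤ := by
  set K := Subgroup.closure (single '' S ∪ inr '' T : Set (Wreath G H))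
  have hsingle : ∀ g, single g ∈ K := fun g => by
    have hg : single g ∈ (Subgroup.closure S).map (single (H := H)) :=
      ⟨g, hS ▸ Subgroup.mem_top g, rfl⟩
    rw [MonoidHom.map_closure] at hg
    exact Subgroup.closure_mono Set.subset_union_left hg
  have hinr : ∀ h, inr h ∈ K := fun h => by
    have hh : inr h ∈ (Subgroup.closure T).map (inr (G := G)) :=
      ⟨h, hT ▸ Subgroup.mem_top h, rfl⟩
    rw [MonoidHom.map_closure] at hh
    exact Subgroup.closure_mono Set.subset_union_right hh
  have hinl : ∀ f, inl f ∈ K := fun f =>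
    Subgroup.pi_mem_of_mulSingle_mem (H := K.comap inl) f fun h => by
      rw [Subgroup.mem_comap, inl_mulSingle]
      exact mul_mem (mul_mem (hinr h) (hsingle _)) (hinr _)
  refine (Subgroup.eq_top_iff' _).2 fun w => ?_
  rw [← SemidirectProduct.inl_left_mul_inr_right w]
  exact mul_mem (hinl _) (hinr _)

variable [Fintype H]

def lift (A : G →* P) (B : H →* P)
    (hAB : ∀ h ≠ 1, ∀ g g', Commute (A g) ((B h)⁻¹ * A g' * B h)) : Wreath G H →* P :=
  SemidirectProduct.lift
    (MonoidHom.noncommPiCoprod _ (pairwise_commute_conj_comp hAB)) B fun h =>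
      MonoidHom.pi_ext fun i g => by simp [wrAction_mulSingle, mul_assoc]

variable (hAB : ∀ h ≠ 1, ∀ g g', Commute (A g) ((B h)⁻¹ * A g' * B h))

@[simp]
lemma lift_single (g : G) : lift A B hAB (single g) = A g :=
  (SemidirectProduct.lift_inl _ _ _ _).trans (by simp)

@[simp]
lemma lift_inr (h : H) : lift A B hAB (inr h) = B h :=
  SemidirectProduct.lift_inr _ _ _ h

end Wreath

end Wr

namespace Stmt8

open Wr Wreath

abbrev W := Wreath (Wreath C2 C2) C2

lemma C2.eq_ofAdd_one_of_ne_one : ∀ h : C2, h ≠ 1 → h = ofAdd 1 := by decide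

def a : Wreath C2 C2 := single (ofAdd 1)
def b : Wreath C2 C2 := inr (ofAdd 1)

def X : W := single a
def Y : W := single b
def Z : W := inr (ofAdd 1)

lemma closure_a_b : Subgroup.closure {a, b} = ⊤ := by
  have h := closure_image_single_union_image_inr (G := C2) (H := C2)
    (closure_ofAdd_one 2) (closure_ofAdd_one 2)
  rwa [Set.image_singleton, Set.image_singleton, Set.singleton_union] at h

lemma closure_X_Y_Z : Subgroup.closure {X, Y, Z} = ⊤ := by
  have h := closure_image_single_union_image_inr (H := C2) closure_a_b (closure_ofAdd_one 2)
  rwa [Set.image_pair, Set.image_singleton, Set.insert_union, Set.singleton_union] at h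

lemma X_Y_Z_satisfy_rels : ∀ r ∈ rels, FreeGroup.lift ![X, Y, Z] r = 1 := by
  simp only [rels, Set.mem_insert_iff, Set.mem_singleton_iff]
  rintro r (rfl | rfl | rfl | rfl | rfl | rfl | rfl | rfl) <;>
    simp only [x, y, z, map_pow, map_commutatorElement, map_mul, map_inv,
      FreeGroup.lift_apply_of, Matrix.cons_val_zero, Matrix.cons_val_one, Matrix.cons_val_two,
      Matrix.head_cons, Matrix.tail_cons] <;>
    decide

def toWreath : PresentedGroup rels →* W := PresentedGroup.toGroup X_Y_Z_satisfy_rels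

lemma of_sq_eq_one {i : Fin 3} (h : FreeGroup.of i ^ 2 ∈ rels) :
    (PresentedGroup.of i : PresentedGroup rels) ^ 2 = 1 := by
  have h_one := PresentedGroup.one_of_mem h
  rwa [map_pow] at h_one

lemma commute_of_conj_of_mem_rels {i j k : Fin 3}
    (h : ⁅FreeGroup.of i, (FreeGroup.of k)⁻¹ * FreeGroup.of j * FreeGroup.of k⁆ ∈ rels) :
    Commute (PresentedGroup.of i : PresentedGroup rels)
      ((PresentedGroup.of k)⁻¹ * PresentedGroup.of j * PresentedGroup.of k) := by
  have h_comm := PresentedGroup.commute_mk_of_commutatorElement_mem h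
  rwa [map_mul, map_mul, map_inv] at h_comm

def innerToPresented : Wreath C2 C2 →* PresentedGroup rels :=
  lift (zmodPowHom 2 (.of 0) (of_sq_eq_one (by simp [rels, x])))
    (zmodPowHom 2 (.of 1) (of_sq_eq_one (by simp [rels, y]))) fun h hh => by
      rw [C2.eq_ofAdd_one_of_ne_one h hh]
      refine commute_conj_of_closure_eq_top (closure_ofAdd_one 2) ?_
      simpa using commute_of_conj_of_mem_rels (i := 0) (j := 0) (k := 1) (by simp [rels, x, y])

@[simp]
lemma innerToPresented_a : innerToPresented a = .of 0 := by simp [innerToPresented, a]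

@[simp]
lemma innerToPresented_b : innerToPresented b = .of 1 := by simp [innerToPresented, b]

def toPresented : W →* PresentedGroup rels :=
  lift innerToPresented (zmodPowHom 2 (.of 2) (of_sq_eq_one (by simp [rels, z]))) fun h hh => by
    rw [C2.eq_ofAdd_one_of_ne_one h hh]
    refine commute_conj_of_closure_eq_top closure_a_b ?_
    simp only [Set.mem_insert_iff, Set.mem_singleton_iff, forall_eq_or_imp, forall_eq,
      innerToPresented_a, innerToPresented_b, zmodPowHom_ofAdd_one]
    refine ⟨⟨?_, ?_⟩, ?_, ?_⟩ <;> exact commute_of_conj_of_mem_rels (by simp [rels, x, y, z])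

/-- The iterated regular wreath product `(C₂ ≀ C₂) ≀ C₂` admits the presentation
`⟨x, y, z ∣ x², y², z², [x,x^y], [y,y^z], [x,x^z], [x,y^z], [y,x^z]⟩`. -/
theorem presentation_of_iterated_wreath :
    Nonempty (PresentedGroup rels ≃* Wreath (Wreath C2 C2) C2) := by
  refine ⟨MonoidHom.toMulEquiv toWreath toPresented ?_ ?_⟩
  · refine PresentedGroup.ext fun i => ?_
    fin_cases i <;> simp [toWreath, X, Y, Z, toPresented]
  · refine MonoidHom.eq_of_eqOn_dense closure_X_Y_Z ?_
    rintro _ (rfl | rfl | rfl) <;> simp [toWreath, X, Y, Z, toPresented]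

end Stmt8
end

section
/- Let F be the free group on {a,b,c,d} and let K be a normal subgroup containing a², b², c², d², and bcd. Then modulo [K,F], the element L = b²c²d²(bcd)⁻² satisfies L ≡ [d,c][d,b][c,b] and L² ∈ [K,F]. -/
/-!
Modulo `[K, F]` every element of `K` is central, so it suffices to work in a group in which
`b²`, `c²`, `d²` and `e = bcd` are central. There `(bc)² = e²d⁻²` is central too, hence
`[b, c] = (bc)²b⁻²c⁻²` (Mathlib's convention `[x, y] = xyx⁻¹y⁻¹`) is central, and it has
order dividing two because `[b², c] = [b, c]²`. The defining word of `L` collapses to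
`b²c²(bc)⁻² = [c, b]`. Finally `d = (bc)⁻¹e`, and a commutator is unchanged by a central
factor or by inverting an element with central square, so `[d, c] = [bc, c] = [b, c]` and
`[d, b] = [bc, b] = [c, b]`.
-/

open scoped commutatorElement

namespace Subgroup

variable {G : Type*} [Group G] {x y z : G}

theorem commutatorElement_mul_mem_center_left (hz : z ∈ center G) : ⁅x * z, y⁆ = ⁅x, y⁆ := by
  rw [commutatorElement_def, commutatorElement_def, mul_inv_rev, mul_assoc x z y,
    (mem_center_iff.mp hz y).symm]
  group

theorem commutatorElement_inv_left_of_sq_mem_center (hx : x ^ 2 ∈ center G) :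
    ⁅x⁻¹, y⁆ = ⁅x, y⁆ := by
  rw [show x⁻¹ = x * (x ^ 2)⁻¹ by group,
    commutatorElement_mul_mem_center_left (inv_mem hx)]

theorem commutatorElement_eq_of_sq_mem_center (hx : x ^ 2 ∈ center G) :
    ⁅x, y⁆ = (x * y) ^ 2 * (x ^ 2)⁻¹ * (y ^ 2)⁻¹ := by
  rw [pow_two (x * y), mul_assoc (x * y), mem_center_iff.mp (inv_mem hx) (x * y)]
  group

theorem commutatorElement_mem_center_of_sq_mem_center (hx : x ^ 2 ∈ center G)
    (hy : y ^ 2 ∈ center G) (hxy : (x * y) ^ 2 ∈ center G) : ⁅x, y⁆ ∈ center G := by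
  rw [commutatorElement_eq_of_sq_mem_center hx]
  exact mul_mem (mul_mem hxy (inv_mem hx)) (inv_mem hy)

theorem commutatorElement_sq_eq_one_of_sq_mem_center (hx : x ^ 2 ∈ center G)
    (h : ⁅x, y⁆ ∈ center G) : ⁅x, y⁆ ^ 2 = 1 := by
  have hx2 : ⁅x ^ 2, y⁆ = 1 :=
    commutatorElement_eq_one_iff_mul_comm.mpr (mem_center_iff.mp hx y).symm
  calc ⁅x, y⁆ ^ 2 = x * ⁅x, y⁆ * x⁻¹ * ⁅x, y⁆ := by
        rw [mem_center_iff.mp h x, mul_inv_cancel_right, pow_two]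
    _ = ⁅x ^ 2, y⁆ := by simp only [commutatorElement_def, pow_two]; group
    _ = 1 := hx2

theorem commute_of_mul_mem_center (hxy : x * y ∈ center G) : Commute x y := by
  calc x * y = y * (x * y) * y⁻¹ := by rw [mem_center_iff.mp hxy y, mul_inv_cancel_right]
    _ = y * x := by group

theorem sq_mem_center_of_mul_mem_center (hxy : x * y ∈ center G) (hy : y ^ 2 ∈ center G) :
    x ^ 2 ∈ center G := by
  have hcomm : Commute (x * y) y⁻¹ := (mem_center_iff.mp hxy y⁻¹).symm
  rw [show x = x * y * y⁻¹ by group, hcomm.mul_pow, inv_pow]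
  exact mul_mem (pow_mem hxy 2) (inv_mem hy)

theorem commutatorElement_eq_of_mul_mem_center (hxy : x * y ∈ center G) (hx : x ^ 2 ∈ center G) :
    ⁅y, z⁆ = ⁅x, z⁆ := by
  rw [show y = x⁻¹ * (x * y) by group, commutatorElement_mul_mem_center_left hxy,
    commutatorElement_inv_left_of_sq_mem_center hx]

section

variable {b c d : G}

theorem sq_mul_sq_mul_sq_mul_inv_sq_eq_commutatorElement (hb : b ^ 2 ∈ center G)
    (hbcd : b * c * d ∈ center G) :
    b ^ 2 * c ^ 2 * d ^ 2 * ((b * c * d) ^ 2)⁻¹ = ⁅c, b⁆ := by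
  rw [← commutatorElement_inv, commutatorElement_eq_of_sq_mem_center hb,
    (commute_of_mul_mem_center hbcd).mul_pow]
  simp only [mul_inv_rev, inv_inv]
  rw [← mul_assoc (c ^ 2), mem_center_iff.mp hb (c ^ 2)]
  group

theorem commutatorElement_mem_center_of_mul_mem_center (hb : b ^ 2 ∈ center G)
    (hc : c ^ 2 ∈ center G) (hd : d ^ 2 ∈ center G) (hbcd : b * c * d ∈ center G) :
    ⁅c, b⁆ ∈ center G := by
  rw [← commutatorElement_inv]
  exact inv_mem <| commutatorElement_mem_center_of_sq_mem_center hb hc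
    (sq_mem_center_of_mul_mem_center hbcd hd)

theorem commutatorElement_mul_commutatorElement_mul_commutatorElement_eq (hb : b ^ 2 ∈ center G)
    (hc : c ^ 2 ∈ center G) (hd : d ^ 2 ∈ center G) (hbcd : b * c * d ∈ center G) :
    ⁅d, c⁆ * ⁅d, b⁆ * ⁅c, b⁆ = ⁅c, b⁆ := by
  have hbc : (b * c) ^ 2 ∈ center G := sq_mem_center_of_mul_mem_center hbcd hd
  have hcb : ⁅c, b⁆ ∈ center G := commutatorElement_mem_center_of_mul_mem_center hb hc hd hbcd
  have hdc : ⁅d, c⁆ = ⁅b, c⁆ := by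
    rw [commutatorElement_eq_of_mul_mem_center hbcd hbc]
    simp only [commutatorElement_def]; group
  have hdb : ⁅d, b⁆ = ⁅c, b⁆ := by
    rw [commutatorElement_eq_of_mul_mem_center hbcd hbc,
      show ⁅b * c, b⁆ = b * ⁅c, b⁆ * b⁻¹ by simp only [commutatorElement_def]; group,
      mem_center_iff.mp hcb b, mul_inv_cancel_right]
  rw [hdc, hdb, ← commutatorElement_inv c b]
  group

end

end Subgroup

theorem QuotientGroup.map_mk'_le_center {G : Type*} [Group G] (K : Subgroup G)
    [K.Normal] :
    K.map (mk' ⁅K, (⊤ : Subgroup G)⁆) ≤ Subgroup.center (G ⧸ ⁅K, (⊤ : Subgroup G)⁆) := by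
  rw [← Subgroup.commutator_top_right_eq_bot_iff_le_center,
    ← Subgroup.map_top_of_surjective _ (mk'_surjective _), ← Subgroup.map_commutator,
    Subgroup.map_eq_bot_iff, ker_mk']

open FreeGroup Subgroup

theorem L_congr_and_L_sq_mem_general
    (K : Subgroup (FreeGroup (Fin 4))) (hK : K.Normal)
    (b c d : FreeGroup (Fin 4))
    (hb2 : b ^ 2 ∈ K) (hc2 : c ^ 2 ∈ K) (hd2 : d ^ 2 ∈ K)
    (hbcd : b * c * d ∈ K) :
    (b ^ 2 * c ^ 2 * d ^ 2 * ((b * c * d) ^ 2)⁻¹) *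
        (⁅d, c⁆ * ⁅d, b⁆ * ⁅c, b⁆)⁻¹ ∈ ⁅K, (⊤ : Subgroup (FreeGroup (Fin 4)))⁆ ∧
      (b ^ 2 * c ^ 2 * d ^ 2 * ((b * c * d) ^ 2)⁻¹) ^ 2 ∈
        ⁅K, (⊤ : Subgroup (FreeGroup (Fin 4)))⁆ := by
  let π := QuotientGroup.mk' ⁅K, (⊤ : Subgroup (FreeGroup (Fin 4)))⁆
  have hZ := QuotientGroup.map_mk'_le_center K
  have hb : π b ^ 2 ∈ center _ := map_pow π b 2 ▸ hZ (mem_map_of_mem π hb2)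
  have hc : π c ^ 2 ∈ center _ := map_pow π c 2 ▸ hZ (mem_map_of_mem π hc2)
  have hd : π d ^ 2 ∈ center _ := map_pow π d 2 ▸ hZ (mem_map_of_mem π hd2)
  have he : π b * π c * π d ∈ center _ := by
    simpa only [_root_.map_mul] using hZ (mem_map_of_mem π hbcd)
  have hL := sq_mul_sq_mul_sq_mul_inv_sq_eq_commutatorElement hb he
  have hprod := commutatorElement_mul_commutatorElement_mul_commutatorElement_eq hb hc hd he
  have hsq := commutatorElement_sq_eq_one_of_sq_mem_center hc
    (commutatorElement_mem_center_of_mul_mem_center hb hc hd he)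
  constructor <;> rw [← QuotientGroup.eq_one_iff] <;> change π _ = 1 <;>
    simp only [_root_.map_mul, _root_.map_inv, map_pow, map_commutatorElement, hL, hprod, hsq,
      mul_inv_cancel]

/-- Let `F` be the free group on `{a,b,c,d}` and `K` a normal subgroup
containing `a², b², c², d²` and `bcd`.  Then, with
`L = b²c²d²(bcd)⁻²`, we have `L ≡ [d,c][d,b][c,b]` modulo `[K,F]`,
and `L² ∈ [K,F]`. -/
theorem L_congr_and_L_sq_mem
    (K : Subgroup (FreeGroup (Fin 4))) (hK : K.Normal)
    (a b c d : FreeGroup (Fin 4))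
    (ha : a = of 0) (hb : b = of 1) (hc : c = of 2) (hd : d = of 3)
    (ha2 : a ^ 2 ∈ K) (hb2 : b ^ 2 ∈ K) (hc2 : c ^ 2 ∈ K) (hd2 : d ^ 2 ∈ K)
    (hbcd : b * c * d ∈ K) :
    (b ^ 2 * c ^ 2 * d ^ 2 * ((b * c * d) ^ 2)⁻¹) *
        (⁅d, c⁆ * ⁅d, b⁆ * ⁅c, b⁆)⁻¹ ∈ ⁅K, (⊤ : Subgroup (FreeGroup (Fin 4)))⁆ ∧
      (b ^ 2 * c ^ 2 * d ^ 2 * ((b * c * d) ^ 2)⁻¹) ^ 2 ∈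
        ⁅K, (⊤ : Subgroup (FreeGroup (Fin 4)))⁆ :=
  L_congr_and_L_sq_mem_general K hK b c d hb2 hc2 hd2 hbcd
end
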